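/- arXiv:1701.04545 — 4 statements merged into one kernel-verified Lean document; each statement's English description precedes it below -/
import Mathlib

section
/- Under the hypotheses of the L₁-invariance principle (M distance-invariant compact metric space), for any N-point multiset D_N ⊂ M and any r one has λ_r[D_N] + θ^Δ_r[D_N] = (v_r − v_r²)·N², where λ_r[D_N] = ∫_M (#{B_r(y) ∩ D_N} − N v_r)² dμ(y) and θ^Δ_r[D_N] = Σ_{x₁,x₂ ∈ D_N} θ^Δ_r(x₁,x₂). -/
open MeasureTheory Metric
open scoped symmDiff

/-!
Writing `𝟙_x` for the indicator of `B_r(x)`, the symmetry `y ∈ B_r(x) ↔ x ∈ B_r(y)` turns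
the counting function into `S = ∑_{x ∈ D_N} 𝟙_x`. Hence `∫ S = N v_r` and
`∫ S² = ∑_{x₁,x₂} μ(B_r(x₁) ∩ B_r(x₂))`, so
`λ_r[D_N] = ∑_{x₁,x₂} μ(B_r(x₁) ∩ B_r(x₂)) - N² v_r²`. Two sets of equal measure `v_r`
satisfy `μ(A ∩ B) + (1/2) μ(A Δ B) = v_r`, so adding `θ^Δ_r[D_N]` cancels the intersection
terms and leaves `N² v_r - N² v_r²`.
-/

theorem List.sum_map_sq {ι R : Type*} [CommSemiring R] (l : List ι) (f : ι → R) :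
    (l.map f).sum ^ 2 = (l.map fun i => (l.map fun j => f i * f j).sum).sum := by
  rw [sq, ← List.sum_map_mul_right]
  simp only [← List.sum_map_mul_left]

theorem Set.indicator_one_mul_indicator_one_apply {α R : Type*} [MulZeroOneClass R]
    (s t : Set α) (a : α) :
    s.indicator (1 : α → R) a * t.indicator 1 a = (s ∩ t).indicator 1 a := by
  rw [Set.inter_indicator_one]
  rfl

theorem Metric.indicator_ball_const_comm {M R : Type*} [PseudoMetricSpace M] [Zero R]
    (x y : M) (r : ℝ) (c : R) :
    (ball y r).indicator (fun _ => c) x = (ball x r).indicator (fun _ => c) y := by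
  simp only [Set.indicator, mem_ball, dist_comm]

namespace MeasureTheory

variable {α ι : Type*} [MeasurableSpace α] {μ : Measure α}

theorem Integrable.list_sum_map (l : List ι) {f : ι → α → ℝ} (hf : ∀ i, Integrable (f i) μ) :
    Integrable (fun a => (l.map (f · a)).sum) μ := by
  simp only [← Fin.sum_univ_fun_getElem l]
  exact integrable_finsetSum _ fun i _ => hf _

theorem integral_list_sum_map (l : List ι) {f : ι → α → ℝ} (hf : ∀ i, Integrable (f i) μ) :
    ∫ a, (l.map (f · a)).sum ∂μ = (l.map fun i => ∫ a, f i a ∂μ).sum := by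
  simp only [← Fin.sum_univ_fun_getElem l]
  exact integral_finsetSum _ fun i _ => hf _

theorem integral_sub_const_sq [IsProbabilityMeasure μ] {f : α → ℝ} (hf : Integrable f μ)
    (hf2 : Integrable (fun a => f a ^ 2) μ) (c : ℝ) :
    ∫ a, (f a - c) ^ 2 ∂μ = ∫ a, f a ^ 2 ∂μ - 2 * c * ∫ a, f a ∂μ + c ^ 2 := by
  have hexpand : (fun a => (f a - c) ^ 2) = fun a => f a ^ 2 - 2 * c * f a + c ^ 2 := by
    ext a; ring
  have hlin : Integrable (fun a => f a ^ 2 - 2 * c * f a) μ := hf2.sub (hf.const_mul _)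
  rw [hexpand, integral_add hlin (integrable_const _),
    integral_sub hf2 (hf.const_mul _), integral_const_mul, integral_const, probReal_univ,
    one_smul]

theorem measureReal_symmDiff_eq_add_sub_two_mul_inter [IsFiniteMeasure μ] {s t : Set α}
    (hs : MeasurableSet s) (ht : MeasurableSet t) :
    μ.real (s ∆ t) = μ.real s + μ.real t - 2 * μ.real (s ∩ t) := by
  have hst := measureReal_sdiff_add_inter (μ := μ) (s := s) ht
  have hts := measureReal_sdiff_add_inter (μ := μ) (s := t) hs
  rw [Set.inter_comm] at hts
  linarith [measureReal_symmDiff_eq (μ := μ) hs ht]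

theorem integral_sum_indicator_sub_sq_add_sum_symmDiff (μ : Measure α)
    [IsProbabilityMeasure μ] (l : List ι) {s : ι → Set α} (hs : ∀ i, MeasurableSet (s i)) {v : ℝ}
    (hv : ∀ i, μ.real (s i) = v) :
    ∫ a, ((l.map fun i => (s i).indicator 1 a).sum - l.length * v) ^ 2 ∂μ
      + (l.map fun i => (l.map fun j => (1 / 2) * μ.real (s i ∆ s j)).sum).sum
      = (v - v ^ 2) * l.length ^ 2 := by
  have hint : ∀ t, MeasurableSet t → Integrable (t.indicator (1 : α → ℝ)) μ :=
    fun t ht => (integrable_const 1).indicator ht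
  have hpair : ∀ i j, μ.real (s i ∩ s j) + (1 / 2) * μ.real (s i ∆ s j) = v := by
    intro i j
    rw [measureReal_symmDiff_eq_add_sub_two_mul_inter (hs i) (hs j), hv, hv]
    ring
  have hint_inter :
      ∀ i, Integrable (fun a => (l.map fun j => (s i ∩ s j).indicator 1 a).sum) μ :=
    fun i => Integrable.list_sum_map l fun j => hint _ ((hs i).inter (hs j))
  have hsq : ∀ a, (l.map fun i => (s i).indicator (1 : α → ℝ) a).sum ^ 2
      = (l.map fun i => (l.map fun j => (s i ∩ s j).indicator 1 a).sum).sum := by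
    simp only [List.sum_map_sq, Set.indicator_one_mul_indicator_one_apply, implies_true]
  have hint_sq :
      Integrable (fun a => (l.map fun i => (s i).indicator (1 : α → ℝ) a).sum ^ 2) μ := by
    simpa only [hsq] using Integrable.list_sum_map l hint_inter
  rw [integral_sub_const_sq (Integrable.list_sum_map l fun i => hint _ (hs i)) hint_sq,
    funext hsq, integral_list_sum_map l hint_inter,
    integral_list_sum_map l fun i => hint _ (hs i)]
  simp_rw [integral_list_sum_map l fun j => hint _ ((hs _).inter (hs j)),
    integral_indicator_one ((hs _).inter (hs _)), integral_indicator_one (hs _), hv]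
  have hcancel : (l.map fun i => (l.map fun j => μ.real (s i ∩ s j)).sum).sum
      + (l.map fun i => (l.map fun j => (1 / 2) * μ.real (s i ∆ s j)).sum).sum
      = l.length ^ 2 * v := by
    simp_rw [← List.sum_map_add, hpair]
    simp only [List.map_const', List.sum_replicate, nsmul_eq_mul]
    ring
  simp only [List.map_const', List.sum_replicate, nsmul_eq_mul]
  linear_combination hcancel

end MeasureTheory

theorem l1_invariance_point_sets_general {M : Type*} [MetricSpace M]
    [MeasurableSpace M] [BorelSpace M]
    (μ : Measure M) [IsProbabilityMeasure μ]
    (r : ℝ) (v : ℝ) (hv : ∀ y : M, (μ (ball y r)).toReal = v)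
    (D : List M) :
    (∫ y, ((D.map fun x => (ball y r).indicator (fun _ => (1 : ℝ)) x).sum
            - (D.length : ℝ) * v) ^ 2 ∂μ)
      + (D.map fun x₁ =>
          (D.map fun x₂ =>
            (1 / 2) * (μ (symmDiff (ball x₁ r) (ball x₂ r))).toReal).sum).sum
      = (v - v ^ 2) * (D.length : ℝ) ^ 2 := by
  have hcount : ∀ y, (D.map fun x => (ball y r).indicator (fun _ => (1 : ℝ)) x)
      = D.map fun x => (ball x r).indicator 1 y :=
    fun y => List.map_congr_left fun x _ => indicator_ball_const_comm x y r 1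
  simp_rw [hcount]
  exact integral_sum_indicator_sub_sq_add_sum_symmDiff μ D (fun _ => measurableSet_ball) hv

/-- L₁-invariance principle for point sets: in a compact distance-invariant metric
space with probability measure `μ`, for any `N`-point multiset `D_N` (a list, with
repetitions allowed) and any radius `r`,
`λ_r[D_N] + θ^Δ_r[D_N] = (v_r − v_r²)·N²`, where
`λ_r[D_N] = ∫ (#{B_r(y) ∩ D_N} − N v_r)² dμ(y)` and
`θ^Δ_r[D_N] = Σ_{x₁,x₂ ∈ D_N} (1/2)μ(B_r(x₁) Δ B_r(x₂))`. -/
theorem l1_invariance_point_sets {M : Type*} [MetricSpace M] [CompactSpace M]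
    [MeasurableSpace M] [BorelSpace M]
    (μ : Measure M) [IsProbabilityMeasure μ]
    (r : ℝ) (v : ℝ) (hv : ∀ y : M, (μ (ball y r)).toReal = v)
    (D : List M) :
    (∫ y, ((D.map fun x => (ball y r).indicator (fun _ => (1 : ℝ)) x).sum
            - (D.length : ℝ) * v) ^ 2 ∂μ)
      + (D.map fun x₁ =>
          (D.map fun x₂ =>
            (1 / 2) * (μ (symmDiff (ball x₁ r) (ball x₂ r))).toReal).sum).sum
      = (v - v ^ 2) * (D.length : ℝ) ^ 2 :=
  l1_invariance_point_sets_general μ r v hv D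
end

section
/- On the unit sphere S^d, there exists a constant γ > 0 (namely γ = (∫_{S^d} |⟨x,y⟩| dμ(y))^{-1} for any fixed x ∈ S^d, which is independent of x) such that τ(y₁,y₂) = γ · θ^Δ(η♮, y₁,y₂) for all y₁, y₂ ∈ S^d, where τ(y₁,y₂) = ‖y₁−y₂‖/2 and η♮(r) = sin r. -/
/-!
A point `x` lies in the symmetric difference of the geodesic balls of radius `r` about `y₁` and
`y₂` exactly when `r` lies between `arccos ⟪x, y₁⟫` and `arccos ⟪x, y₂⟫`; integrating `sin` over
that interval gives `|⟪x, y₁⟫ - ⟪x, y₂⟫|`, so by Fubini `θ^Δ(η♮, y₁, y₂) = ½ ∫ |⟪y₁ - y₂, x⟫| dμ`.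
Scaling out `‖y₁ - y₂‖` leaves `∫ |⟪u, x⟫| dμ(x)` for a unit vector `u`, which does not depend on
`u` because a reflection of the sphere carries `u` to any other unit vector and preserves `μ`. It
is positive because the squared coordinates of a unit vector sum to `1`, and each is at most its
absolute value.
-/

open MeasureTheory Real Set Metric
open scoped RealInnerProductSpace

lemma symmDiff_Ioi_Ioi (a b : ℝ) : symmDiff (Ioi a) (Ioi b) = Ioc (min a b) (max a b) := by
  ext r
  simp only [mem_symmDiff, mem_Ioi, mem_Ioc, min_lt_iff, le_max_iff, not_lt]
  grind

lemma integral_indicator_symmDiff_Ioi_arccos_sin {a b : ℝ} (ha : a ∈ Icc (-1) 1)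
    (hb : b ∈ Icc (-1) 1) :
    ∫ r in 0..π, (symmDiff (Ioi (arccos a)) (Ioi (arccos b))).indicator sin r = |a - b| := by
  rw [symmDiff_Ioi_Ioi, ← antitone_arccos.map_max, ← antitone_arccos.map_min,
    intervalIntegral.integral_of_le pi_pos.le, setIntegral_indicator measurableSet_Ioc,
    Ioc_inter_Ioc, max_eq_right (arccos_nonneg _), min_eq_right (arccos_le_pi _),
    ← intervalIntegral.integral_of_le (arccos_le_arccos min_le_max), integral_sin,
    cos_arccos (le_max_of_le_left ha.1) (max_le ha.2 hb.2),
    cos_arccos (le_min ha.1 hb.1) (min_le_of_left_le ha.2), max_sub_min_eq_abs, abs_sub_comm]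

theorem integral_toReal_measure_symmDiff_arccos_lt_mul_sin {X : Type*} [MeasurableSpace X]
    (μ : Measure X) [IsFiniteMeasure μ] {f g : X → ℝ} (hf : Measurable f) (hg : Measurable g)
    (hf₁ : ∀ x, f x ∈ Icc (-1) 1) (hg₁ : ∀ x, g x ∈ Icc (-1) 1) :
    ∫ r in 0..π, (μ (symmDiff {x | arccos (f x) < r} {x | arccos (g x) < r})).toReal * sin r
      = ∫ x, |f x - g x| ∂μ := by
  set H : ℝ → X → ℝ := fun r x ↦
    (symmDiff (Ioi (arccos (f x))) (Ioi (arccos (g x)))).indicator sin r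
  have hslice (r : ℝ) :
      (μ (symmDiff {x | arccos (f x) < r} {x | arccos (g x) < r})).toReal * sin r
        = ∫ x, H r x ∂μ :=
    (integral_indicator_const (sin r) ((measurableSet_lt (by fun_prop) measurable_const).symmDiff
      (measurableSet_lt (by fun_prop) measurable_const))).symm
  have hH : Integrable (Function.uncurry H) ((volume.restrict (uIoc 0 π)).prod μ) := by
    rw [uIoc_of_le pi_pos.le]
    have hmeas : MeasurableSet
        (symmDiff {p : ℝ × X | arccos (f p.2) < p.1} {p | arccos (g p.2) < p.1}) :=
      (measurableSet_lt (by fun_prop) measurable_fst).symmDiff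
        (measurableSet_lt (by fun_prop) measurable_fst)
    refine .of_bound ((measurable_sin.comp measurable_fst).indicator hmeas).aestronglyMeasurable 1
      (ae_of_all _ fun p ↦ (norm_indicator_le_norm_self _ _).trans ?_)
    simpa using abs_sin_le_one p.1
  calc _ = ∫ r in 0..π, ∫ x, H r x ∂μ := by simp_rw [hslice]
    _ = ∫ x, (∫ r in 0..π, H r x) ∂μ := intervalIntegral_integral_swap hH
    _ = _ := integral_congr_ae (ae_of_all _ fun x ↦
      integral_indicator_symmDiff_Ioi_arccos_sin (hf₁ x) (hg₁ x))

variable {E : Type*} [NormedAddCommGroup E] [InnerProductSpace ℝ E]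

noncomputable def LinearIsometryEquiv.restrictSphere (e : E ≃ₗᵢ[ℝ] E) (r : ℝ) :
    sphere (0 : E) r ≃ᵢ sphere (0 : E) r where
  toEquiv := e.toEquiv.subtypeEquiv fun x ↦ by simp
  isometry_toFun := Isometry.of_dist_eq fun x y ↦ by simp [Subtype.dist_eq, e.dist_map]

lemma exists_isometryEquiv_sphere_inner_eq (u v : sphere (0 : E) 1) :
    ∃ g : sphere (0 : E) 1 ≃ᵢ sphere (0 : E) 1, ∀ y, ⟪(v : E), g y⟫ = ⟪(u : E), y⟫ := by
  have huv : ‖(u : E)‖ = ‖(v : E)‖ := by simp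
  set R := (ℝ ∙ ((u : E) - v))ᗮ.reflection
  refine ⟨R.restrictSphere 1, fun y ↦ ?_⟩
  change ⟪(v : E), R y⟫ = _
  rw [← Submodule.reflection_sub huv, R.inner_map_map]

lemma integral_comp_inner_eq_of_map_eq [MeasurableSpace E] [BorelSpace E]
    {μ : Measure (sphere (0 : E) 1)}
    (hμ : ∀ g : sphere (0 : E) 1 ≃ᵢ sphere (0 : E) 1, μ.map g = μ)
    (φ : ℝ → ℝ) (u v : sphere (0 : E) 1) :
    ∫ y, φ ⟪(u : E), y⟫ ∂μ = ∫ y, φ ⟪(v : E), y⟫ ∂μ := by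
  obtain ⟨g, hg⟩ := exists_isometryEquiv_sphere_inner_eq u v
  have hg_pres : MeasurePreserving g.toHomeomorph.toMeasurableEquiv μ μ :=
    ⟨g.continuous.measurable, hμ g⟩
  simp_rw [← hg]
  exact hg_pres.integral_comp' (fun y ↦ φ ⟪(v : E), y⟫)

lemma integral_abs_inner_eq_norm_mul [MeasurableSpace E] {μ : Measure (sphere (0 : E) 1)}
    {c : ℝ} (hc : ∀ u : sphere (0 : E) 1, ∫ y, |⟪(u : E), y⟫| ∂μ = c) (v : E) :
    ∫ y, |⟪v, y⟫| ∂μ = ‖v‖ * c := by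
  rcases eq_or_ne v 0 with rfl | hv
  · simp
  set u : sphere (0 : E) 1 := ⟨‖v‖⁻¹ • v, by simp [norm_smul, hv]⟩
  have hvu : v = ‖v‖ • (u : E) := by simp [u, smul_smul, hv]
  conv_lhs => rw [hvu]
  simp_rw [real_inner_smul_left, abs_mul, abs_norm]
  rw [integral_const_mul, hc]

lemma pos_of_integral_abs_inner_eq [FiniteDimensional ℝ E] [MeasurableSpace E]
    [OpensMeasurableSpace E] (μ : Measure (sphere (0 : E) 1)) [IsProbabilityMeasure μ]
    {c : ℝ} (hc : ∀ u : sphere (0 : E) 1, ∫ y, |⟪(u : E), y⟫| ∂μ = c) : 0 < c := by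
  set b := stdOrthonormalBasis ℝ E
  have hle (i) (y : sphere (0 : E) 1) : |⟪b i, y⟫| ≤ 1 := by
    simpa using abs_real_inner_le_norm (b i) y
  have hint (i) : Integrable (fun y : sphere (0 : E) 1 ↦ |⟪b i, y⟫|) μ :=
    Integrable.of_bound (by fun_prop) 1 (ae_of_all _ fun y ↦ by simpa using hle i y)
  have hsum (y : sphere (0 : E) 1) : 1 ≤ ∑ i, |⟪b i, y⟫| :=
    calc (1 : ℝ) = ∑ i, |⟪b i, y⟫| ^ 2 := by simp [b.sum_sq_inner_right]
      _ ≤ ∑ i, |⟪b i, y⟫| := Finset.sum_le_sum fun i _ ↦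
        pow_le_of_le_one (abs_nonneg _) (hle i y) two_ne_zero
  have : 1 ≤ Module.finrank ℝ E * c := by
    calc (1 : ℝ) = ∫ _, 1 ∂μ := by simp
      _ ≤ ∫ y, ∑ i, |⟪b i, y⟫| ∂μ :=
        integral_mono (integrable_const 1) (integrable_finsetSum _ fun i _ ↦ hint i) hsum
      _ = _ := by
        rw [integral_finsetSum _ fun i _ ↦ hint i]
        simp [integral_abs_inner_eq_norm_mul hc]
  exact pos_of_mul_pos_right (one_pos.trans_le this) (Nat.cast_nonneg _)

/-- On the unit sphere `S^d` with rotation-invariant probability measure `μ` and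
geodesic metric `θ(x,y) = arccos⟨x,y⟩`, there is a constant `γ > 0`, namely
`γ = (∫_{S^d} |⟨x,y⟩| dμ(y))⁻¹` for any fixed `x` (independent of `x`), such that
the chordal metric `τ(y₁,y₂) = ‖y₁−y₂‖/2` equals `γ · θ^Δ(η♮,y₁,y₂)` with
`η♮(r) = sin r`. -/
theorem chordal_eq_gamma_symmDiff_sphere {d : ℕ}
    (μ : Measure (Metric.sphere (0 : EuclideanSpace ℝ (Fin (d + 1))) 1))
    [IsProbabilityMeasure μ]
    (hinv : ∀ g : Metric.sphere (0 : EuclideanSpace ℝ (Fin (d + 1))) 1 ≃ᵢ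
              Metric.sphere (0 : EuclideanSpace ℝ (Fin (d + 1))) 1,
      μ.map g = μ) :
    ∃ γ : ℝ, 0 < γ ∧
      (∀ x : Metric.sphere (0 : EuclideanSpace ℝ (Fin (d + 1))) 1,
        γ = (∫ y, |(inner ℝ (x : EuclideanSpace ℝ (Fin (d + 1))) (y : EuclideanSpace ℝ (Fin (d + 1))) : ℝ)| ∂μ)⁻¹) ∧
      ∀ y₁ y₂ : Metric.sphere (0 : EuclideanSpace ℝ (Fin (d + 1))) 1,
        ‖(y₁ : EuclideanSpace ℝ (Fin (d + 1))) - (y₂ : EuclideanSpace ℝ (Fin (d + 1)))‖ / 2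
          = γ * ∫ r in (0:ℝ)..π,
              (1 / 2) * (μ (symmDiff
                {x | arccos (inner ℝ (x : EuclideanSpace ℝ (Fin (d + 1))) (y₁ : EuclideanSpace ℝ (Fin (d + 1))) : ℝ) < r}
                {x | arccos (inner ℝ (x : EuclideanSpace ℝ (Fin (d + 1))) (y₂ : EuclideanSpace ℝ (Fin (d + 1))) : ℝ) < r})).toReal
              * sin r := by
  obtain ⟨x₀⟩ := nonempty_of_isProbabilityMeasure μ
  set c := ∫ y, |⟪x₀.1, y.1⟫| ∂μ
  have hc (x : sphere (0 : EuclideanSpace ℝ (Fin (d + 1))) 1) :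
      ∫ y, |⟪x.1, y.1⟫| ∂μ = c :=
    integral_comp_inner_eq_of_map_eq hinv abs x x₀
  have hc_pos : 0 < c := pos_of_integral_abs_inner_eq μ hc
  refine ⟨c⁻¹, inv_pos.2 hc_pos, fun x ↦ by rw [hc], fun y₁ y₂ ↦ ?_⟩
  have h_Icc (y x : sphere (0 : EuclideanSpace ℝ (Fin (d + 1))) 1) :
      ⟪x.1, y.1⟫ ∈ Icc (-1) 1 :=
    real_inner_mem_Icc_of_norm_eq_one (by simp) (by simp)
  simp_rw [mul_assoc, intervalIntegral.integral_const_mul]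
  rw [integral_toReal_measure_symmDiff_arccos_lt_mul_sin μ (by fun_prop) (by fun_prop)
    (h_Icc y₁) (h_Icc y₂)]
  simp_rw [← inner_sub_right, real_inner_comm (y₁.1 - y₂.1)]
  rw [integral_abs_inner_eq_norm_mul hc]
  field_simp
end

section
/- Stolarsky invariance principle on S^d: for any N points x₁,…,x_N on S^d, γ·λ[η♮, D_N] + Σ_{i,j} τ(x_i,x_j) = ⟨τ⟩ N², where λ[η♮,D_N] = ∫_0^π sin r ∫_{S^d} (#{B_r(y) ∩ D_N} − N v_r)² dμ(y) dr, ⟨τ⟩ = ∬ τ dμ dμ, and γ = ⟨τ⟩/⟨θ^Δ(η♮)⟩. -/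
open MeasureTheory Real

noncomputable section

/-- The unit sphere `S^d ⊂ ℝ^{d+1}`. -/
abbrev Sph (d : ℕ) := Metric.sphere (0 : EuclideanSpace ℝ (Fin (d + 1))) 1

/-- Geodesic distance on the sphere: `θ(x,y) = arccos⟨x,y⟩`. -/
def geo {d : ℕ} (x y : Sph d) : ℝ :=
  arccos (inner ℝ (x : EuclideanSpace ℝ (Fin (d + 1))) (y : EuclideanSpace ℝ (Fin (d + 1))) : ℝ)

/-- Geodesic ball of radius `r` centered at `y`. -/
def geoBall {d : ℕ} (y : Sph d) (r : ℝ) : Set (Sph d) := {x | geo x y < r}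

/-- Chordal metric `τ(x,y) = ‖x − y‖/2` on the sphere. -/
def chord {d : ℕ} (x y : Sph d) : ℝ :=
  ‖(x : EuclideanSpace ℝ (Fin (d + 1))) - (y : EuclideanSpace ℝ (Fin (d + 1)))‖ / 2

/-- Symmetric difference metric with weight `η♮(r) = sin r`. -/
def thetaDelta {d : ℕ} (μ : Measure (Sph d)) (y₁ y₂ : Sph d) : ℝ :=
  ∫ r in (0:ℝ)..π, (1 / 2) * (μ (symmDiff (geoBall y₁ r) (geoBall y₂ r))).toReal * sin r


/-!
Two identities combine. The L₁-invariance principle: pulling the count `#(B_r(y) ∩ D_N)` back to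
`∑ᵢ 𝟙_{B_r(xᵢ)}(y)` and expanding the square (a variance, since its mean is `N v_r`) gives
`∑ᵢⱼ μ(B_r(xᵢ) ∩ B_r(xⱼ)) − N² v_r²`; as `μ(B ∩ B') = v_r − μ(B ∆ B')/2`, integrating against
`sin r` yields `λ + ∑ᵢⱼ θ^Δ(xᵢ, xⱼ) = N² ∫₀^π (v_r − v_r²) sin r dr`, and Fubini identifies the
right-hand integral with `⟨θ^Δ⟩`.

Proportionality: `z ∈ B_r(x) ∆ B_r(y)` exactly for `r` between `θ(z, x)` and `θ(z, y)`, so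
integrating `sin r` in `r` first gives `θ^Δ(x, y) = ∫ |⟨z, x − y⟩| / 2 dμ(z)`. Rotation invariance
makes `∫ |⟨z, u⟩| dμ(z)` the same constant `κ` for all unit `u` (a reflection swaps any two), so
`θ^Δ = κ τ`; `κ > 0` because `∑ᵢ |zᵢ| ≥ ∑ᵢ zᵢ² = 1`. Hence `γ = 1/κ` and the principle divided by
`κ` is the theorem.
-/

open scoped RealInnerProductSpace symmDiff Interval

def LinearIsometryEquiv.sphereIsometryEquiv {F : Type*} [NormedAddCommGroup F] [NormedSpace ℝ F]
    (f : F ≃ₗᵢ[ℝ] F) (R : ℝ) : Metric.sphere (0 : F) R ≃ᵢ Metric.sphere (0 : F) R where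
  toEquiv := f.toEquiv.subtypeEquiv fun z => by simp
  isometry_toFun := fun z w => f.isometry.edist_eq z w

theorem integral_measureReal_preimage_prodMk_left {α β : Type*} [MeasurableSpace α]
    [MeasurableSpace β] (μ : Measure α) (ν : Measure β) [IsFiniteMeasure μ] [IsFiniteMeasure ν]
    {S : Set (α × β)} (hS : MeasurableSet S) :
    ∫ x, ν.real (Prod.mk x ⁻¹' S) ∂μ = ∫ y, μ.real ((·, y) ⁻¹' S) ∂ν := by
  have h := integral_integral_swap (f := fun x y => S.indicator (1 : α × β → ℝ) (x, y))
    ((integrable_const (μ := μ.prod ν) 1).indicator hS)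
  simp only [← integral_indicator_one (measurable_prodMk_left hS),
    ← integral_indicator_one (measurable_prodMk_right hS)]
  exact h

instance isFiniteMeasure_restrict_uIoc (a b : ℝ) : IsFiniteMeasure (volume.restrict (Ι a b)) :=
  isFiniteMeasure_restrict.2 (by simp [Real.volume_uIoc])

theorem uIoc_subset_Ioc_zero_pi {a b : ℝ} (ha : a ∈ Set.Icc 0 π) (hb : b ∈ Set.Icc 0 π) :
    Ι a b ⊆ Set.Ioc 0 π :=
  Set.Ioc_subset_Ioc (le_min ha.1 hb.1) (max_le ha.2 hb.2)

theorem integral_uIoc_sin {a b : ℝ} (ha : a ∈ Set.Icc 0 π) (hb : b ∈ Set.Icc 0 π) :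
    ∫ r in Ι a b, sin r = |cos a - cos b| := by
  have hnonneg : 0 ≤ ∫ r in Ι a b, sin r :=
    setIntegral_nonneg measurableSet_uIoc fun r hr =>
      sin_nonneg_of_nonneg_of_le_pi (uIoc_subset_Ioc_zero_pi ha hb hr).1.le
        (uIoc_subset_Ioc_zero_pi ha hb hr).2
  rw [← abs_of_nonneg hnonneg, ← intervalIntegral.abs_intervalIntegral_eq, integral_sin]

instance Sph.nonempty (d : ℕ) : Nonempty (Sph d) :=
  NormedSpace.sphere_nonempty_rclike ℝ zero_le_one

section

variable {d : ℕ}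

local notation "E" => EuclideanSpace ℝ (Fin (d + 1))

theorem geo_comm (x y : Sph d) : geo x y = geo y x := by
  rw [geo, geo, real_inner_comm]

theorem continuous_geo : Continuous fun p : Sph d × Sph d => geo p.1 p.2 :=
  continuous_arccos.comp
    ((continuous_subtype_val.comp continuous_fst).inner
      (continuous_subtype_val.comp continuous_snd))

theorem geo_mem_Icc (x y : Sph d) : geo x y ∈ Set.Icc 0 π :=
  ⟨arccos_nonneg _, arccos_le_pi _⟩

theorem cos_geo (x y : Sph d) : cos (geo x y) = ⟪(x : E), y⟫ := by
  have h : |⟪(x : E), y⟫| ≤ 1 := by simpa using abs_real_inner_le_norm (x : E) y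
  exact cos_arccos (abs_le.1 h).1 (abs_le.1 h).2

theorem mem_geoBall_comm {x y : Sph d} {r : ℝ} : x ∈ geoBall y r ↔ y ∈ geoBall x r := by
  simp only [geoBall, Set.mem_ofPred_eq, geo_comm]

theorem measurableSet_mem_geoBall {α : Type*} [MeasurableSpace α] {z c : α → Sph d} {r : α → ℝ}
    (hz : Measurable z) (hc : Measurable c) (hr : Measurable r) :
    MeasurableSet {a | z a ∈ geoBall (c a) (r a)} :=
  measurableSet_lt (continuous_geo.measurable.comp (hz.prodMk hc)) hr

theorem measurableSet_geoBall (y : Sph d) (r : ℝ) : MeasurableSet (geoBall y r) :=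
  measurableSet_mem_geoBall measurable_id measurable_const measurable_const

theorem setOf_mem_symmDiff_geoBall (x y z : Sph d) :
    {r | z ∈ geoBall x r ∆ geoBall y r} = Ι (geo z x) (geo z y) := by
  ext r
  simp only [Set.mem_symmDiff, Set.mem_uIoc, geoBall, Set.mem_ofPred_eq, not_lt]

theorem thetaDelta_eq_integral_abs_inner (μ : Measure (Sph d)) [IsFiniteMeasure μ]
    (x y : Sph d) : thetaDelta μ x y = ∫ z, |⟪(z : E), x - y⟫| / 2 ∂μ := by
  set F : ℝ → Sph d → ℝ := fun r z => (geoBall x r ∆ geoBall y r).indicator (fun _ => sin r / 2) z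
  have hF : Integrable (Function.uncurry F) ((volume.restrict (Ι 0 π)).prod μ) := by
    have hS : MeasurableSet {p : ℝ × Sph d | p.2 ∈ geoBall x p.1 ∆ geoBall y p.1} :=
      (measurableSet_mem_geoBall measurable_snd measurable_const measurable_fst).symmDiff
        (measurableSet_mem_geoBall measurable_snd measurable_const measurable_fst)
    refine Integrable.of_bound
      (((measurable_sin.comp measurable_fst).div_const 2).indicator hS).aestronglyMeasurable 1
      (ae_of_all _ fun p => ?_)
    refine (norm_indicator_le_norm_self (fun _ => sin p.1 / 2) p.2).trans ?_
    rw [norm_div, Real.norm_eq_abs, Real.norm_two]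
    linarith [abs_sin_le_one p.1]
  calc thetaDelta μ x y = ∫ r in 0..π, ∫ z, F r z ∂μ := by
        refine intervalIntegral.integral_congr fun r _ => ?_
        simp only [F, integral_indicator_const _ ((measurableSet_geoBall x r).symmDiff
          (measurableSet_geoBall y r)), smul_eq_mul, measureReal_def]
        ring
    _ = ∫ z, (∫ r in 0..π, F r z) ∂μ := intervalIntegral_integral_swap hF
    _ = ∫ z, |⟪(z : E), x - y⟫| / 2 ∂μ := by
        congr 1 with z
        have hFz : (F · z) = (Ι (geo z x) (geo z y)).indicator (fun r => sin r / 2) := by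
          rw [← setOf_mem_symmDiff_geoBall]; rfl
        rw [hFz, intervalIntegral.integral_of_le pi_pos.le,
          setIntegral_indicator measurableSet_uIoc,
          Set.inter_eq_right.2 (uIoc_subset_Ioc_zero_pi (geo_mem_Icc z x) (geo_mem_Icc z y)),
          integral_div, integral_uIoc_sin (geo_mem_Icc z x) (geo_mem_Icc z y), cos_geo, cos_geo,
          inner_sub_right]

theorem integral_abs_inner_eq_of_norm_eq_one (μ : Measure (Sph d))
    (hinv : ∀ g : Sph d ≃ᵢ Sph d, μ.map g = μ) {u w : E} (hu : ‖u‖ = 1) (hw : ‖w‖ = 1) :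
    ∫ z, |⟪(z : E), u⟫| ∂μ = ∫ z, |⟪(z : E), w⟫| ∂μ := by
  set ρ := Submodule.reflection (ℝ ∙ (w - u))ᗮ
  have hρ : ρ w = u := Submodule.reflection_sub (hw.trans hu.symm)
  set g := ρ.sphereIsometryEquiv 1
  calc ∫ z, |⟪(z : E), u⟫| ∂μ = ∫ z, |⟪(g z : E), u⟫| ∂μ := by
        conv_lhs => rw [← hinv g]
        exact integral_map_equiv g.toHomeomorph.toMeasurableEquiv _
    _ = ∫ z, |⟪(z : E), w⟫| ∂μ := by
        congr 1 with z
        change |⟪ρ z, u⟫| = _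
        rw [← hρ, LinearIsometryEquiv.inner_map_map]

theorem integral_abs_inner_eq_norm_mul_s10 (μ : Measure (Sph d))
    (hinv : ∀ g : Sph d ≃ᵢ Sph d, μ.map g = μ) {u : E} (hu : ‖u‖ = 1) (w : E) :
    ∫ z, |⟪(z : E), w⟫| ∂μ = ‖w‖ * ∫ z, |⟪(z : E), u⟫| ∂μ := by
  rcases eq_or_ne w 0 with rfl | hw
  · simp
  have hw' : ‖(‖w‖⁻¹ : ℝ) • w‖ = 1 := norm_smul_inv_norm hw
  calc ∫ z, |⟪(z : E), w⟫| ∂μ = ∫ z, ‖w‖ * |⟪(z : E), (‖w‖⁻¹ : ℝ) • w⟫| ∂μ := by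
        congr 1 with z
        rw [real_inner_smul_right, abs_mul, abs_inv, abs_norm,
          mul_inv_cancel_left₀ (norm_ne_zero_iff.2 hw)]
    _ = ‖w‖ * ∫ z, |⟪(z : E), u⟫| ∂μ := by
        rw [integral_const_mul, integral_abs_inner_eq_of_norm_eq_one μ hinv hw' hu]

theorem integral_abs_inner_pos (μ : Measure (Sph d)) [IsProbabilityMeasure μ]
    (hinv : ∀ g : Sph d ≃ᵢ Sph d, μ.map g = μ) {u : E} (hu : ‖u‖ = 1) :
    0 < ∫ z, |⟪(z : E), u⟫| ∂μ := by
  have hcoord (i : Fin (d + 1)) : ∫ z, |(z : E) i| ∂μ = ∫ z, |⟪(z : E), u⟫| ∂μ := by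
    have hi : ‖EuclideanSpace.single i (1 : ℝ)‖ = 1 := by simp
    rw [integral_abs_inner_eq_of_norm_eq_one μ hinv hu hi]
    simp [EuclideanSpace.inner_single_right]
  have hle (z : Sph d) (i : Fin (d + 1)) : |(z : E) i| ≤ 1 := by
    simpa using PiLp.norm_apply_le (z : E) i
  have hsum (z : Sph d) : 1 ≤ ∑ i, |(z : E) i| := by
    calc (1 : ℝ) = ∑ i, |(z : E) i| ^ 2 := by simp [← EuclideanSpace.real_norm_sq_eq]
      _ ≤ ∑ i, |(z : E) i| :=
        Finset.sum_le_sum fun i _ => by nlinarith [hle z i, abs_nonneg ((z : E) i)]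
  have hint (i : Fin (d + 1)) : Integrable (fun z : Sph d => |(z : E) i|) μ :=
    Integrable.of_bound
      ((PiLp.continuous_apply 2 _ i).comp continuous_subtype_val).abs.aestronglyMeasurable 1
      (ae_of_all _ fun z => by simpa using hle z i)
  have : 1 ≤ (d + 1) * ∫ z, |⟪(z : E), u⟫| ∂μ := by
    calc (1 : ℝ) = ∫ _, 1 ∂μ := by simp
      _ ≤ ∫ z, ∑ i, |(z : E) i| ∂μ :=
        integral_mono (integrable_const 1) (integrable_finsetSum _ fun i _ => hint i) hsum
      _ = (d + 1) * ∫ z, |⟪(z : E), u⟫| ∂μ := by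
        simp [integral_finsetSum _ fun i _ => hint i, hcoord]
  nlinarith

theorem exists_pos_thetaDelta_eq_mul_chord (μ : Measure (Sph d)) [IsProbabilityMeasure μ]
    (hinv : ∀ g : Sph d ≃ᵢ Sph d, μ.map g = μ) :
    ∃ κ > 0, ∀ x y, thetaDelta μ x y = κ * chord x y := by
  have hu : ‖EuclideanSpace.single (0 : Fin (d + 1)) (1 : ℝ)‖ = 1 := by simp
  refine ⟨∫ z, |⟪(z : E), EuclideanSpace.single 0 1⟫| ∂μ, integral_abs_inner_pos μ hinv hu,
    fun x y => ?_⟩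
  rw [thetaDelta_eq_integral_abs_inner, integral_div, integral_abs_inner_eq_norm_mul_s10 μ hinv hu,
    chord]
  ring

theorem geoBall_mono (y : Sph d) {r s : ℝ} (h : r ≤ s) : geoBall y r ⊆ geoBall y s :=
  fun _ hz => lt_of_lt_of_le hz h

theorem monotone_measureReal_geoBall_inter (μ : Measure (Sph d)) [IsFiniteMeasure μ]
    (x y : Sph d) : Monotone fun r => μ.real (geoBall x r ∩ geoBall y r) :=
  fun _ _ h => measureReal_mono (Set.inter_subset_inter (geoBall_mono x h) (geoBall_mono y h))

theorem monotone_of_measureReal_geoBall_eq (μ : Measure (Sph d)) [IsFiniteMeasure μ]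
    {v : ℝ → ℝ} (hv : ∀ y r, μ.real (geoBall y r) = v r) : Monotone v := by
  intro r s h
  let x : Sph d := Classical.arbitrary _
  rw [← hv x r, ← hv x s]
  exact measureReal_mono (geoBall_mono x h)

theorem measureReal_geoBall_inter_add_half_symmDiff (μ : Measure (Sph d)) [IsFiniteMeasure μ]
    {v : ℝ → ℝ} (hv : ∀ y r, μ.real (geoBall y r) = v r) (x y : Sph d) (r : ℝ) :
    μ.real (geoBall x r ∩ geoBall y r) + μ.real (geoBall x r ∆ geoBall y r) / 2 = v r := by
  have hx := measureReal_inter_add_sdiff (μ := μ) (s := geoBall x r) (measurableSet_geoBall y r)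
  have hy := measureReal_inter_add_sdiff (μ := μ) (s := geoBall y r) (measurableSet_geoBall x r)
  have hvx := hv x r
  have hvy := hv y r
  rw [Set.inter_comm] at hy
  rw [measureReal_symmDiff_eq (measurableSet_geoBall x r) (measurableSet_geoBall y r)]
  linarith

theorem thetaDelta_eq_intervalIntegral (μ : Measure (Sph d)) [IsFiniteMeasure μ]
    {v : ℝ → ℝ} (hv : ∀ y r, μ.real (geoBall y r) = v r) (x y : Sph d) :
    thetaDelta μ x y = ∫ r in 0..π, (v r - μ.real (geoBall x r ∩ geoBall y r)) * sin r := by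
  refine intervalIntegral.integral_congr fun r _ => ?_
  change 1 / 2 * μ.real _ * sin r = _
  rw [← measureReal_geoBall_inter_add_half_symmDiff μ hv x y r]
  ring

theorem integral_measureReal_inter_geoBall (μ : Measure (Sph d)) [IsFiniteMeasure μ]
    {v : ℝ → ℝ} (hv : ∀ y r, μ.real (geoBall y r) = v r)
    {A : Set (Sph d)} (hA : MeasurableSet A) (r : ℝ) :
    ∫ y, μ.real (A ∩ geoBall y r) ∂μ = μ.real A * v r := by
  have hS : MeasurableSet {p : Sph d × Sph d | p.2 ∈ A ∩ geoBall p.1 r} :=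
    (hA.preimage measurable_snd).inter
      (measurableSet_mem_geoBall measurable_snd measurable_fst measurable_const)
  refine (integral_measureReal_preimage_prodMk_left μ μ hS).trans ?_
  have hslice (z : Sph d) : μ.real {y | z ∈ A ∩ geoBall y r} = A.indicator (fun _ => v r) z := by
    by_cases hz : z ∈ A
    · simp only [Set.indicator_of_mem hz, Set.mem_inter_iff, hz, true_and, mem_geoBall_comm]
      exact hv z r
    · simp [hz]
  simp only [Set.preimage_ofPred_eq, hslice, integral_indicator_const _ hA, smul_eq_mul]

theorem integral_thetaDelta_right (μ : Measure (Sph d)) [IsProbabilityMeasure μ]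
    {v : ℝ → ℝ} (hv : ∀ y r, μ.real (geoBall y r) = v r) (x : Sph d) :
    ∫ y, thetaDelta μ x y ∂μ = ∫ r in 0..π, (v r - v r ^ 2) * sin r := by
  have hK : Measurable fun p : ℝ × Sph d => μ.real (geoBall x p.1 ∩ geoBall p.2 p.1) :=
    (measurable_measure_prodMk_left
      ((measurableSet_mem_geoBall measurable_snd measurable_const
          (measurable_fst.comp measurable_fst)).inter
        (measurableSet_mem_geoBall measurable_snd (measurable_snd.comp measurable_fst)
          (measurable_fst.comp measurable_fst)))).ennreal_toReal
  have hint : Integrable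
      (Function.uncurry fun r y => (v r - μ.real (geoBall x r ∩ geoBall y r)) * sin r)
      ((volume.restrict (Ι 0 π)).prod μ) := by
    have hv' := (monotone_of_measureReal_geoBall_eq μ hv).measurable
    refine Integrable.of_bound
      (((hv'.comp measurable_fst).sub hK).mul
        (measurable_sin.comp measurable_fst)).aestronglyMeasurable 1 (ae_of_all _ fun p => ?_)
    have h := measureReal_geoBall_inter_add_half_symmDiff μ hv x p.2 p.1
    have h0 : 0 ≤ μ.real (geoBall x p.1 ∆ geoBall p.2 p.1) := measureReal_nonneg
    have h1 : μ.real (geoBall x p.1 ∆ geoBall p.2 p.1) ≤ 1 := measureReal_le_one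
    rw [Function.uncurry_apply_pair, norm_mul, Real.norm_eq_abs, Real.norm_eq_abs]
    exact mul_le_one₀ (abs_le.2 ⟨by linarith, by linarith⟩) (abs_nonneg _) (abs_sin_le_one _)
  calc ∫ y, thetaDelta μ x y ∂μ
      = ∫ y, (∫ r in 0..π, (v r - μ.real (geoBall x r ∩ geoBall y r)) * sin r) ∂μ := by
        simp only [thetaDelta_eq_intervalIntegral μ hv]
    _ = ∫ r in 0..π, ∫ y, (v r - μ.real (geoBall x r ∩ geoBall y r)) * sin r ∂μ :=
        (intervalIntegral_integral_swap hint).symm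
    _ = ∫ r in 0..π, (v r - v r ^ 2) * sin r := by
        refine intervalIntegral.integral_congr fun r _ => ?_
        have hKr : Integrable (fun y => μ.real (geoBall x r ∩ geoBall y r)) μ :=
          Integrable.of_bound (hK.comp measurable_prodMk_left).aestronglyMeasurable 1
            (ae_of_all _ fun y => by
              rw [Real.norm_eq_abs, abs_of_nonneg measureReal_nonneg]; exact measureReal_le_one)
        rw [integral_mul_const, integral_sub (integrable_const _) hKr, integral_const,
          probReal_univ, one_smul,
          integral_measureReal_inter_geoBall μ hv (measurableSet_geoBall x r), hv x r]
        ring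

theorem integral_sq_sum_indicator_geoBall_sub (μ : Measure (Sph d)) [IsProbabilityMeasure μ]
    {v : ℝ → ℝ} (hv : ∀ y r, μ.real (geoBall y r) = v r)
    {N : ℕ} (D : Fin N → Sph d) (r : ℝ) :
    ∫ y, ((∑ i, (geoBall y r).indicator (fun _ => (1 : ℝ)) (D i)) - N * v r) ^ 2 ∂μ
      = ∑ i, ∑ j, μ.real (geoBall (D i) r ∩ geoBall (D j) r) - N ^ 2 * v r ^ 2 := by
  set X : Sph d → ℝ := fun y => ∑ i, (geoBall (D i) r).indicator 1 y
  have hX (y : Sph d) : ∑ i, (geoBall y r).indicator (fun _ => (1 : ℝ)) (D i) = X y := by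
    refine Finset.sum_congr rfl fun i _ => ?_
    classical
    simp only [Set.indicator_apply, mem_geoBall_comm, Pi.one_apply]
  have hint (i : Fin N) : Integrable ((geoBall (D i) r).indicator (1 : Sph d → ℝ)) μ :=
    (integrable_const 1).indicator (measurableSet_geoBall _ _)
  have hmean : ∫ y, X y ∂μ = N * v r := by
    simp [X, integral_finsetSum _ fun i _ => hint i,
      integral_indicator_one (measurableSet_geoBall _ _), hv]
  have hsq : ∫ y, X y ^ 2 ∂μ = ∑ i, ∑ j, μ.real (geoBall (D i) r ∩ geoBall (D j) r) := by
    have hB (i j : Fin N) : MeasurableSet (geoBall (D i) r ∩ geoBall (D j) r) :=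
      (measurableSet_geoBall _ _).inter (measurableSet_geoBall _ _)
    have hintB (i j : Fin N) :
        Integrable ((geoBall (D i) r ∩ geoBall (D j) r).indicator (1 : Sph d → ℝ)) μ :=
      (integrable_const 1).indicator (hB i j)
    have hXsq (y : Sph d) :
        X y ^ 2 = ∑ i, ∑ j, (geoBall (D i) r ∩ geoBall (D j) r).indicator 1 y := by
      simp only [X, sq, Finset.sum_mul_sum, Set.inter_indicator_one, Pi.mul_apply]
    simp only [hXsq]
    rw [integral_finsetSum _ fun i _ => integrable_finsetSum _ fun j _ => hintB i j]
    simp only [integral_finsetSum _ fun j _ => hintB _ j, integral_indicator_one (hB _ _)]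
  have hmemLp : MemLp X 2 μ :=
    memLp_finsetSum _ fun i _ => (memLp_const 1).indicator (measurableSet_geoBall _ _)
  simp only [hX]
  rw [← hmean, ← ProbabilityTheory.variance_eq_integral hmemLp.aemeasurable,
    ProbabilityTheory.variance_eq_sub hmemLp]
  simp only [Pi.pow_apply, hsq, hmean]
  ring

def l2Discrepancy (μ : Measure (Sph d)) (v : ℝ → ℝ) {N : ℕ} (D : Fin N → Sph d) : ℝ :=
  ∫ r in (0:ℝ)..π, sin r *
    ∫ y, ((∑ i, (geoBall y r).indicator (fun _ => (1 : ℝ)) (D i)) - (N : ℝ) * v r) ^ 2 ∂μ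

theorem l2Discrepancy_nonneg (μ : Measure (Sph d)) (v : ℝ → ℝ) {N : ℕ} (D : Fin N → Sph d) :
    0 ≤ l2Discrepancy μ v D :=
  intervalIntegral.integral_nonneg pi_pos.le fun _ hr =>
    mul_nonneg (sin_nonneg_of_nonneg_of_le_pi hr.1 hr.2) (integral_nonneg fun _ => sq_nonneg _)

theorem intervalIntegrable_sub_measureReal_geoBall_inter_mul_sin (μ : Measure (Sph d))
    [IsFiniteMeasure μ] {v : ℝ → ℝ} (hv : ∀ y r, μ.real (geoBall y r) = v r) (x y : Sph d) :
    IntervalIntegrable (fun r => (v r - μ.real (geoBall x r ∩ geoBall y r)) * sin r) volume 0 π :=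
  ((monotone_of_measureReal_geoBall_eq μ hv).intervalIntegrable.sub
    (monotone_measureReal_geoBall_inter μ x y).intervalIntegrable).mul_continuousOn
    continuous_sin.continuousOn

theorem sum_thetaDelta_eq_intervalIntegral (μ : Measure (Sph d)) [IsFiniteMeasure μ]
    {v : ℝ → ℝ} (hv : ∀ y r, μ.real (geoBall y r) = v r) {N : ℕ} (D : Fin N → Sph d) :
    ∑ i, ∑ j, thetaDelta μ (D i) (D j)
      = ∫ r in 0..π,
          (N ^ 2 * v r - ∑ i, ∑ j, μ.real (geoBall (D i) r ∩ geoBall (D j) r)) * sin r := by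
  have hint := intervalIntegrable_sub_measureReal_geoBall_inter_mul_sin μ hv
  have hrow (i : Fin N) : IntervalIntegrable
      (fun r => ∑ j, (v r - μ.real (geoBall (D i) r ∩ geoBall (D j) r)) * sin r) volume 0 π := by
    simpa only [Finset.sum_fn] using IntervalIntegrable.sum _ fun j _ => hint (D i) (D j)
  simp only [thetaDelta_eq_intervalIntegral μ hv,
    ← intervalIntegral.integral_finsetSum fun j _ => hint _ (D j),
    ← intervalIntegral.integral_finsetSum fun i _ => hrow i]
  refine intervalIntegral.integral_congr fun r _ => ?_
  simp only [← Finset.sum_mul, Finset.sum_sub_distrib, Finset.sum_const, Finset.card_univ,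
    Fintype.card_fin, nsmul_eq_mul]
  ring

theorem l2Discrepancy_add_sum_thetaDelta (μ : Measure (Sph d)) [IsProbabilityMeasure μ]
    {v : ℝ → ℝ} (hv : ∀ y r, μ.real (geoBall y r) = v r)
    {N : ℕ} (D : Fin N → Sph d) :
    l2Discrepancy μ v D + ∑ i, ∑ j, thetaDelta μ (D i) (D j)
      = (∫ x, ∫ y, thetaDelta μ x y ∂μ ∂μ) * N ^ 2 := by
  set K : ℝ → ℝ := fun r => ∑ i, ∑ j, μ.real (geoBall (D i) r ∩ geoBall (D j) r)
  have hvmono := monotone_of_measureReal_geoBall_eq μ hv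
  have hv0 (r : ℝ) : 0 ≤ v r := hv (Classical.arbitrary _) r ▸ measureReal_nonneg
  have hsin := continuous_sin.continuousOn (s := [[0, π]])
  have hK : IntervalIntegrable K volume 0 π := by
    simpa only [Finset.sum_fn] using IntervalIntegrable.sum _ fun i _ =>
      IntervalIntegrable.sum _ fun j _ =>
        (monotone_measureReal_geoBall_inter μ (D i) (D j)).intervalIntegrable
  have hv2 : IntervalIntegrable (fun r => v r ^ 2) volume 0 π :=
    Monotone.intervalIntegrable fun a b h => pow_le_pow_left₀ (hv0 a) (hvmono h) 2
  have hmean : ∫ x, ∫ y, thetaDelta μ x y ∂μ ∂μ = ∫ r in 0..π, (v r - v r ^ 2) * sin r := by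
    simp [integral_thetaDelta_right μ hv]
  simp only [l2Discrepancy, integral_sq_sum_indicator_geoBall_sub μ hv D]
  rw [sum_thetaDelta_eq_intervalIntegral μ hv D, hmean, ← intervalIntegral.integral_mul_const,
    ← intervalIntegral.integral_add ((hK.sub (hv2.const_mul _)).continuousOn_mul hsin)
      (((hvmono.intervalIntegrable.const_mul _).sub hK).mul_continuousOn hsin)]
  refine intervalIntegral.integral_congr fun r _ => ?_
  ring

end

/-- Stolarsky invariance principle on `S^d`: for any `N` points `x₁,…,x_N` on the
sphere, `γ·λ[η♮,D_N] + Σ_{i,j} τ(x_i,x_j) = ⟨τ⟩ N²` where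
`λ[η♮,D_N] = ∫_0^π sin r ∫ (#{B_r(y) ∩ D_N} − N v_r)² dμ(y) dr`,
`⟨τ⟩ = ∬ τ dμ dμ`, and `γ = ⟨τ⟩/⟨θ^Δ(η♮)⟩`. -/
theorem stolarsky_invariance_sphere {d N : ℕ}
    (μ : Measure (Sph d)) [IsProbabilityMeasure μ]
    (hinv : ∀ g : Sph d ≃ᵢ Sph d, μ.map g = μ)
    (v : ℝ → ℝ) (hv : ∀ (y : Sph d) (r : ℝ), (μ (geoBall y r)).toReal = v r)
    (D : Fin N → Sph d) :
    ((∫ x, ∫ y, chord x y ∂μ ∂μ) / (∫ x, ∫ y, thetaDelta μ x y ∂μ ∂μ)) *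
        (∫ r in (0:ℝ)..π, sin r *
          ∫ y, ((∑ i, (geoBall y r).indicator (fun _ => (1 : ℝ)) (D i))
                  - (N : ℝ) * v r) ^ 2 ∂μ)
      + (∑ i, ∑ j, chord (D i) (D j))
      = (∫ x, ∫ y, chord x y ∂μ ∂μ) * (N : ℝ) ^ 2 := by
  obtain ⟨κ, hκ, hθ⟩ := exists_pos_thetaDelta_eq_mul_chord μ hinv
  have hL1 := l2Discrepancy_add_sum_thetaDelta μ hv D
  simp only [hθ, integral_const_mul, ← Finset.mul_sum] at hL1
  change _ / _ * l2Discrepancy μ v D + _ = _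
  simp only [hθ, integral_const_mul]
  have hΛ := l2Discrepancy_nonneg μ v D
  have hS : 0 ≤ ∑ i, ∑ j, chord (D i) (D j) :=
    Finset.sum_nonneg fun i _ => Finset.sum_nonneg fun j _ => div_nonneg (norm_nonneg _) two_pos.le
  -- `⟨τ⟩ = 0` cannot happen, but it is cheaper to handle than to exclude: there `γ` is the junk
  -- value `0 / 0 = 0`, and `λ + κ ∑ τ = 0` with both terms nonnegative forces `∑ τ = 0`.
  rcases eq_or_ne (∫ x, ∫ y, chord x y ∂μ ∂μ) 0 with hT | hT
  · rw [hT] at hL1 ⊢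
    simp only [mul_zero, div_zero, zero_mul, zero_add] at hL1 ⊢
    nlinarith
  · field_simp
    linarith
end
end

section
/- In a geodesic metric space where ball volumes satisfy the formula v_r = κ ∫_0^r (sin(u/2))^{d−1}(cos(u/2))^{d₀−1} du, the Lipschitz-type bound θ^Δ_r(y₁,y₂) ≤ C (sin(r/2))^{d−1} (cos(r/2))^{d₀−1} θ(y₁,y₂) holds with a constant C depending only on d and d₀, using the inclusion B_{r−δ}(y₀) ⊆ B_r(y₁) ∩ B_r(y₂) for the geodesic midpoint y₀ of y₁, y₂ with δ = θ(y₁,y₂)/2. -/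
/-!
Write `f(u) = sin (u/2)^(d-1) cos (u/2)^(d₀-1)`. If `0 < r < π` and `e = dist a b ≤ min r (π - r)`,
the triangle inequality puts `B_r(a) \ B_r(b)` inside the annulus `B_{r+e}(b) \ B_r(b)`, of volume
`κ ∫_r^{r+e} f ≤ |κ| 2^(d-1) f(r) e`: on `[r/2, (r+e)/2]` the sine at most doubles and the cosine
decreases. Since `(a, b) ↦ μ(B_r(a) ∆ B_r(b))` satisfies the triangle inequality, bisecting at
midpoints extends this linear bound from nearby pairs to all pairs. The radius `π`, where `f(π)`
may vanish, follows by letting `r ↑ π`: the annuli `B_π \ B_r` have volume `κ ∫_r^π f → 0`.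
-/

open MeasureTheory Metric Real

open Set Filter Topology
open scoped symmDiff

lemma sin_add_le_sin_add_sin {x y : ℝ} (hx₀ : 0 ≤ x) (hxπ : x ≤ π) (hy₀ : 0 ≤ y) (hyπ : y ≤ π) :
    sin (x + y) ≤ sin x + sin y := by
  rw [sin_add]
  gcongr ?_ + ?_
  · exact mul_le_of_le_one_right (sin_nonneg_of_nonneg_of_le_pi hx₀ hxπ) (cos_le_one y)
  · exact mul_le_of_le_one_left (sin_nonneg_of_nonneg_of_le_pi hy₀ hyπ) (cos_le_one x)

noncomputable def ballVolumeDensity (d d₀ : ℕ) (u : ℝ) : ℝ :=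
  sin (u / 2) ^ (d - 1) * cos (u / 2) ^ (d₀ - 1)

section ballVolumeDensity

variable {d d₀ : ℕ}

@[fun_prop]
lemma continuous_ballVolumeDensity : Continuous (ballVolumeDensity d d₀) := by
  unfold ballVolumeDensity
  fun_prop

lemma ballVolumeDensity_nonneg {u : ℝ} (hu₀ : 0 ≤ u) (huπ : u ≤ π) :
    0 ≤ ballVolumeDensity d d₀ u :=
  mul_nonneg (pow_nonneg (sin_nonneg_of_nonneg_of_le_pi (by linarith) (by linarith)) _)
    (pow_nonneg (cos_nonneg_of_mem_Icc ⟨by linarith, by linarith⟩) _)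

lemma ballVolumeDensity_le {r e u : ℝ} (hr : 0 ≤ r) (he : e ≤ r) (hre : r + e ≤ π)
    (hu : u ∈ Icc r (r + e)) :
    ballVolumeDensity d d₀ u ≤ 2 ^ (d - 1) * ballVolumeDensity d d₀ r := by
  obtain ⟨hru, hue⟩ := hu
  have hsin : sin (u / 2) ≤ 2 * sin (r / 2) :=
    calc sin (u / 2) ≤ sin (r / 2 + e / 2) :=
          sin_le_sin_of_le_of_le_pi_div_two (by linarith) (by linarith) (by linarith)
      _ ≤ sin (r / 2) + sin (e / 2) :=
          sin_add_le_sin_add_sin (by linarith) (by linarith) (by linarith) (by linarith)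
      _ ≤ 2 * sin (r / 2) := by
          linarith [sin_le_sin_of_le_of_le_pi_div_two (x := e / 2) (y := r / 2)
            (by linarith) (by linarith) (by linarith)]
  have hcos : cos (u / 2) ≤ cos (r / 2) :=
    cos_le_cos_of_nonneg_of_le_pi (by linarith) (by linarith) (by linarith)
  calc ballVolumeDensity d d₀ u ≤ (2 * sin (r / 2)) ^ (d - 1) * cos (r / 2) ^ (d₀ - 1) := by
        have hsu : 0 ≤ sin (u / 2) := sin_nonneg_of_nonneg_of_le_pi (by linarith) (by linarith)
        have hcu : 0 ≤ cos (u / 2) := cos_nonneg_of_mem_Icc ⟨by linarith, by linarith⟩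
        exact mul_le_mul (pow_le_pow_left₀ hsu hsin _) (pow_le_pow_left₀ hcu hcos _)
          (pow_nonneg hcu _) (pow_nonneg (hsu.trans hsin) _)
    _ = 2 ^ (d - 1) * ballVolumeDensity d d₀ r := by
        rw [ballVolumeDensity, mul_pow, mul_assoc]

lemma integral_ballVolumeDensity_le {r e : ℝ} (hr : 0 ≤ r) (he₀ : 0 ≤ e) (he : e ≤ r)
    (hre : r + e ≤ π) :
    ∫ u in r..r + e, ballVolumeDensity d d₀ u ≤ 2 ^ (d - 1) * ballVolumeDensity d d₀ r * e := by
  calc ∫ u in r..r + e, ballVolumeDensity d d₀ u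
      ≤ ∫ _ in r..r + e, 2 ^ (d - 1) * ballVolumeDensity d d₀ r :=
        intervalIntegral.integral_mono_on (by linarith)
          (continuous_ballVolumeDensity.intervalIntegrable _ _) intervalIntegrable_const
          fun u hu => ballVolumeDensity_le hr he hre hu
    _ = 2 ^ (d - 1) * ballVolumeDensity d d₀ r * e := by
        rw [intervalIntegral.integral_const, smul_eq_mul, add_sub_cancel_left, mul_comm]

end ballVolumeDensity

lemma le_mul_dist_of_forall_dist_le {M : Type*} [PseudoMetricSpace M]
    (hmid : ∀ y₁ y₂ : M, ∃ y₀ : M,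
      dist y₁ y₀ = dist y₁ y₂ / 2 ∧ dist y₂ y₀ = dist y₁ y₂ / 2)
    {g : M → M → ℝ} (htri : ∀ a b c, g a c ≤ g a b + g b c) {ε L : ℝ} (hε : 0 < ε)
    (hloc : ∀ a b, dist a b ≤ ε → g a b ≤ L * dist a b) (a b : M) :
    g a b ≤ L * dist a b := by
  have hchain : ∀ k : ℕ, ∀ a b, dist a b ≤ 2 ^ k * ε → g a b ≤ L * dist a b := by
    intro k
    induction k with
    | zero => simpa using hloc
    | succ k ih =>
      intro a b hab
      obtain ⟨m, ham, hbm⟩ := hmid a b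
      have hmb : dist m b = dist a b / 2 := by rw [dist_comm, hbm]
      have hhalf : dist a b / 2 ≤ 2 ^ k * ε := by rw [pow_succ] at hab; linarith
      calc g a b ≤ g a m + g m b := htri a m b
        _ ≤ L * dist a m + L * dist m b :=
            add_le_add (ih a m (ham ▸ hhalf)) (ih m b (hmb ▸ hhalf))
        _ = L * dist a b := by rw [ham, hmb]; ring
  obtain ⟨k, hk⟩ := pow_unbounded_of_one_lt (dist a b / ε) one_lt_two
  exact hchain k a b ((div_lt_iff₀ hε).1 hk).le

lemma symmDiff_ball_subset {M : Type*} [PseudoMetricSpace M] (a b : M) {s t : ℝ} (hst : s ≤ t) :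
    ball a t ∆ ball b t ⊆ ball a s ∆ ball b s ∪ (ball a t \ ball a s ∪ ball b t \ ball b s) := by
  have ha := ball_subset_ball (x := a) hst
  have hb := ball_subset_ball (x := b) hst
  intro z
  simp only [Set.mem_symmDiff, Set.mem_union, Set.mem_sdiff]
  tauto

def HasBallVolume {M : Type*} [PseudoMetricSpace M] [MeasurableSpace M] (μ : Measure M) (κ : ℝ)
    (f : ℝ → ℝ) : Prop :=
  ∀ (y : M) (r : ℝ), r ∈ Icc 0 π → μ.real (ball y r) = κ * ∫ u in 0..r, f u

section BallVolumes

variable {M : Type*} [PseudoMetricSpace M] [MeasurableSpace M] [OpensMeasurableSpace M]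
  {μ : Measure M} [IsFiniteMeasure μ] {κ : ℝ} {f : ℝ → ℝ}

lemma measureReal_ball_sdiff_ball
    (hv : HasBallVolume μ κ f) (hf : Continuous f) (y : M) {s t : ℝ} (hs : 0 ≤ s) (hst : s ≤ t)
    (ht : t ≤ π) :
    μ.real (ball y t \ ball y s) = κ * ∫ u in s..t, f u := by
  rw [measureReal_sdiff (ball_subset_ball hst) measurableSet_ball, hv y t ⟨hs.trans hst, ht⟩,
    hv y s ⟨hs, hst.trans ht⟩, ← mul_sub,
    intervalIntegral.integral_interval_sub_left (hf.intervalIntegrable _ _)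
      (hf.intervalIntegrable _ _)]

lemma measureReal_ball_sdiff_ball_le
    (hv : HasBallVolume μ κ f) (hf : Continuous f) {a b : M} {r : ℝ} (hr : 0 ≤ r)
    (hre : r + dist a b ≤ π) :
    μ.real (ball a r \ ball b r) ≤ κ * ∫ u in r..r + dist a b, f u :=
  calc μ.real (ball a r \ ball b r) ≤ μ.real (ball b (r + dist a b) \ ball b r) :=
        measureReal_mono (sdiff_le_sdiff_right (ball_subset_ball' le_rfl))
    _ = κ * ∫ u in r..r + dist a b, f u :=
        measureReal_ball_sdiff_ball hv hf b hr (le_add_of_nonneg_right dist_nonneg) hre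

lemma measureReal_symmDiff_ball_pi_le
    (hv : HasBallVolume μ κ f) (hf : Continuous f) (a b : M) {g : ℝ → ℝ}
    (hg : ContinuousWithinAt g (Iio π) π)
    (hbound : ∀ s ∈ Ioo 0 π, μ.real (ball a s ∆ ball b s) ≤ g s) :
    μ.real (ball a π ∆ ball b π) ≤ g π := by
  have hlim : Tendsto (fun s => g s + 2 * (κ * ∫ u in s..π, f u)) (𝓝[<] π) (𝓝 (g π)) := by
    have hI : Continuous fun s => ∫ u in s..π, f u := by
      simp_rw [intervalIntegral.integral_symm π]
      exact (intervalIntegral.continuous_primitive (fun _ _ => hf.intervalIntegrable _ _) π).neg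
    simpa using hg.tendsto.add (((hI.tendsto π).mono_left nhdsWithin_le_nhds).const_mul κ
      |>.const_mul 2)
  refine ge_of_tendsto hlim ?_
  filter_upwards [Ioo_mem_nhdsLT pi_pos] with s hs
  calc μ.real (ball a π ∆ ball b π)
      ≤ μ.real (ball a s ∆ ball b s ∪ (ball a π \ ball a s ∪ ball b π \ ball b s)) :=
        measureReal_mono (symmDiff_ball_subset a b hs.2.le)
    _ ≤ μ.real (ball a s ∆ ball b s) +
          (μ.real (ball a π \ ball a s) + μ.real (ball b π \ ball b s)) :=
        (measureReal_union_le _ _).trans (add_le_add le_rfl (measureReal_union_le _ _))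
    _ ≤ g s + 2 * (κ * ∫ u in s..π, f u) := by
        rw [measureReal_ball_sdiff_ball hv hf a hs.1.le hs.2.le le_rfl,
          measureReal_ball_sdiff_ball hv hf b hs.1.le hs.2.le le_rfl]
        linarith [hbound s hs]

variable {d d₀ : ℕ}

lemma measureReal_ball_sdiff_ball_le_of_dist_le
    (hv : HasBallVolume μ κ (ballVolumeDensity d d₀)) {a b : M} {r : ℝ} (hr : 0 ≤ r)
    (he : dist a b ≤ r) (hre : r + dist a b ≤ π) :
    μ.real (ball a r \ ball b r) ≤ |κ| * (2 ^ (d - 1) * ballVolumeDensity d d₀ r) * dist a b := by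
  have hI₀ : 0 ≤ ∫ u in r..r + dist a b, ballVolumeDensity d d₀ u :=
    intervalIntegral.integral_nonneg (le_add_of_nonneg_right dist_nonneg) fun u hu =>
      ballVolumeDensity_nonneg (hr.trans hu.1) (hu.2.trans hre)
  calc μ.real (ball a r \ ball b r)
      ≤ κ * ∫ u in r..r + dist a b, ballVolumeDensity d d₀ u :=
        measureReal_ball_sdiff_ball_le hv continuous_ballVolumeDensity hr hre
    _ ≤ |κ| * ∫ u in r..r + dist a b, ballVolumeDensity d d₀ u :=
        mul_le_mul_of_nonneg_right (le_abs_self κ) hI₀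
    _ ≤ |κ| * (2 ^ (d - 1) * ballVolumeDensity d d₀ r * dist a b) := by
        gcongr
        exact integral_ballVolumeDensity_le hr dist_nonneg he hre
    _ = |κ| * (2 ^ (d - 1) * ballVolumeDensity d d₀ r) * dist a b := by ring

lemma measureReal_symmDiff_ball_le_of_dist_le
    (hv : HasBallVolume μ κ (ballVolumeDensity d d₀)) {a b : M} {r : ℝ} (hr : 0 ≤ r)
    (he : dist a b ≤ r) (hre : r + dist a b ≤ π) :
    μ.real (ball a r ∆ ball b r) ≤
      2 * (|κ| * (2 ^ (d - 1) * ballVolumeDensity d d₀ r)) * dist a b := by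
  rw [measureReal_symmDiff_eq measurableSet_ball measurableSet_ball]
  have hab := measureReal_ball_sdiff_ball_le_of_dist_le hv hr he hre
  have hba := measureReal_ball_sdiff_ball_le_of_dist_le (a := b) (b := a) hv hr
    (by rwa [dist_comm]) (by rwa [dist_comm])
  rw [dist_comm] at hba
  linarith

lemma measureReal_symmDiff_ball_le_of_lt_pi
    (hv : HasBallVolume μ κ (ballVolumeDensity d d₀))
    (hmid : ∀ y₁ y₂ : M, ∃ y₀ : M,
      dist y₁ y₀ = dist y₁ y₂ / 2 ∧ dist y₂ y₀ = dist y₁ y₂ / 2)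
    {r : ℝ} (hr₀ : 0 < r) (hrπ : r < π) (a b : M) :
    μ.real (ball a r ∆ ball b r) ≤
      2 * (|κ| * (2 ^ (d - 1) * ballVolumeDensity d d₀ r)) * dist a b :=
  le_mul_dist_of_forall_dist_le (g := fun a b => μ.real (ball a r ∆ ball b r)) hmid
    (fun _ _ _ => measureReal_symmDiff_le _)
    (lt_min hr₀ (sub_pos.2 hrπ)) (fun _ _ h => measureReal_symmDiff_ball_le_of_dist_le hv hr₀.le
      (h.trans (min_le_left _ _)) (by linarith [h.trans (min_le_right _ _)])) a b

lemma measureReal_symmDiff_ball_le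
    (hv : HasBallVolume μ κ (ballVolumeDensity d d₀))
    (hmid : ∀ y₁ y₂ : M, ∃ y₀ : M,
      dist y₁ y₀ = dist y₁ y₂ / 2 ∧ dist y₂ y₀ = dist y₁ y₂ / 2)
    {r : ℝ} (hr : r ∈ Icc 0 π) (a b : M) :
    μ.real (ball a r ∆ ball b r) ≤
      2 * (|κ| * (2 ^ (d - 1) * ballVolumeDensity d d₀ r)) * dist a b := by
  obtain ⟨hr₀, hrπ⟩ := hr
  rcases hr₀.eq_or_lt with rfl | hr₀
  · simp [ballVolumeDensity]
    positivity
  rcases hrπ.lt_or_eq with hrπ | rfl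
  · exact measureReal_symmDiff_ball_le_of_lt_pi hv hmid hr₀ hrπ a b
  · have hg : Continuous fun s =>
        2 * (|κ| * (2 ^ (d - 1) * ballVolumeDensity d d₀ s)) * dist a b := by fun_prop
    exact measureReal_symmDiff_ball_pi_le hv continuous_ballVolumeDensity a b
      hg.continuousWithinAt fun s hs => measureReal_symmDiff_ball_le_of_lt_pi hv hmid hs.1 hs.2 a b

end BallVolumes

theorem symmDiff_metric_lipschitz_general {M : Type*} [MetricSpace M]
    [MeasurableSpace M] [BorelSpace M]
    (μ : Measure M) [IsProbabilityMeasure μ]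
    (d d₀ : ℕ) (κ : ℝ)
    (hv : ∀ (y : M) (r : ℝ), r ∈ Set.Icc (0 : ℝ) π →
      (μ (ball y r)).toReal =
        κ * ∫ u in (0:ℝ)..r, (sin (u / 2)) ^ (d - 1) * (cos (u / 2)) ^ (d₀ - 1))
    (hmid : ∀ y₁ y₂ : M, ∃ y₀ : M,
      dist y₁ y₀ = dist y₁ y₂ / 2 ∧ dist y₂ y₀ = dist y₁ y₂ / 2) :
    ∃ C : ℝ, 0 < C ∧ ∀ (y₁ y₂ : M), ∀ r ∈ Set.Icc (0 : ℝ) π,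
      (1 / 2) * (μ (symmDiff (ball y₁ r) (ball y₂ r))).toReal
        ≤ C * (sin (r / 2)) ^ (d - 1) * (cos (r / 2)) ^ (d₀ - 1) * dist y₁ y₂ := by
  refine ⟨|κ| * 2 ^ (d - 1) + 1, by positivity, fun y₁ y₂ r hr => ?_⟩
  have hΔ := measureReal_symmDiff_ball_le (μ := μ) hv hmid hr y₁ y₂
  have hρ : 0 ≤ ballVolumeDensity d d₀ r := ballVolumeDensity_nonneg hr.1 hr.2
  calc (1 / 2) * μ.real (ball y₁ r ∆ ball y₂ r)
      ≤ |κ| * 2 ^ (d - 1) * ballVolumeDensity d d₀ r * dist y₁ y₂ := by linarith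
    _ ≤ (|κ| * 2 ^ (d - 1) + 1) * ballVolumeDensity d d₀ r * dist y₁ y₂ := by
        gcongr
        linarith
    _ = _ := by rw [ballVolumeDensity]; ring

/-- Lipschitz-type bound for the symmetric difference metric: in a metric space of
diameter `π` with midpoints, whose ball volumes are given by
`v_r = κ ∫_0^r (sin(u/2))^{d−1}(cos(u/2))^{d₀−1} du`, one has
`θ^Δ_r(y₁,y₂) ≤ C (sin(r/2))^{d−1}(cos(r/2))^{d₀−1} θ(y₁,y₂)`
with a constant `C` depending only on `d` and `d₀`. -/
theorem symmDiff_metric_lipschitz {M : Type*} [MetricSpace M] [CompactSpace M]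
    [MeasurableSpace M] [BorelSpace M]
    (μ : Measure M) [IsProbabilityMeasure μ]
    (d d₀ : ℕ) (hd₀ : 1 ≤ d₀) (hdd : d₀ ≤ d) (κ : ℝ)
    (hv : ∀ (y : M) (r : ℝ), r ∈ Set.Icc (0 : ℝ) π →
      (μ (ball y r)).toReal =
        κ * ∫ u in (0:ℝ)..r, (sin (u / 2)) ^ (d - 1) * (cos (u / 2)) ^ (d₀ - 1))
    (hdiam : ∀ x y : M, dist x y ≤ π)
    (hmid : ∀ y₁ y₂ : M, ∃ y₀ : M,
      dist y₁ y₀ = dist y₁ y₂ / 2 ∧ dist y₂ y₀ = dist y₁ y₂ / 2) :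
    ∃ C : ℝ, 0 < C ∧ ∀ (y₁ y₂ : M), ∀ r ∈ Set.Icc (0 : ℝ) π,
      (1 / 2) * (μ (symmDiff (ball y₁ r) (ball y₂ r))).toReal
        ≤ C * (sin (r / 2)) ^ (d - 1) * (cos (r / 2)) ^ (d₀ - 1) * dist y₁ y₂ :=
  symmDiff_metric_lipschitz_general μ d d₀ κ hv hmid
end
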